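/- Let α, β > -1 and let r be a positive integer. There exist constants c₁, c₂ > 0, depending only on α, β and r, such that for all integers n ≥ 1, 0 ≤ k ≤ n and 0 ≤ j ≤ r: c₁ · (n/(k+1))^{j} ≤ A_{r,j,k,n}^{α,β} ≤ c₂ · (n/(k+1))^{j}. -/

import Mathlib

/-! Both Pochhammer quotients in `A_{r,j,k,n}` have `j` factors, so `A_{r,j,k,n} = C(r,j) ∏_{i<j} f_i`
with `f_i = (k+β+1+i)(n+k+α+β+2+i) / ((2k+α+β+j+1+i)(2k+α+β+r+2+i))`. For `k ≤ n` and `i < j ≤ r`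
the first numerator factor and both denominator factors are comparable to `k+1`, and the second
numerator factor to `n`, with constants depending only on `α, β, r`; hence every `f_i` is comparable
to `n/(k+1)`, and `1 ≤ C(r,j) ≤ 2^r`. -/

open Finset

noncomputable section

/-- The Pochhammer symbol `(a)_n = a (a+1) ⋯ (a+n-1)` for real `a`. -/
def poch (a : ℝ) (n : ℕ) : ℝ := Polynomial.eval a (ascPochhammer ℝ n)

/-- The coefficient `A_{r,j,k,n}^{α,β}`, set to `0` when `j < 0` or `j > r`. -/
def Acoef (α β : ℝ) (r : ℕ) (j : ℤ) (k n : ℕ) : ℝ :=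
  if 0 ≤ j ∧ j ≤ (r : ℤ) then
    (r.choose j.toNat : ℝ) * poch ((k : ℝ) + β + 1) j.toNat *
        poch ((n : ℝ) + k + α + β + 2) j.toNat /
      (poch (2 * k + α + β + j + 1) j.toNat * poch (2 * k + α + β + r + 2) j.toNat)
  else 0

/-- The matrix `M_r(k,n)`. -/
def Mrkn (α β : ℝ) (r k n : ℕ) : Matrix (Fin (2 * r)) (Fin (2 * r)) ℝ :=
  fun i j =>
    if (i : ℕ) < r then Acoef α β r ((j : ℤ) - (i : ℤ)) (k + i) n
    else (-1 : ℝ) ^ ((j : ℤ) - (i : ℤ) + r) * Acoef β α r ((j : ℤ) - (i : ℤ) + r) (k + i - r) n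

lemma poch_eq_prod (a : ℝ) (j : ℕ) : poch a j = ∏ i ∈ range j, (a + i) := by
  induction j with
  | zero => simp [poch]
  | succ m ih =>
    rw [poch, ascPochhammer_succ_right, prod_range_succ, ← ih, poch]
    simp [mul_comm]

lemma min_one_pow_le_pow {q : ℝ} (hq : 0 ≤ q) {j r : ℕ} (hjr : j ≤ r) : min 1 q ^ r ≤ q ^ j :=
  calc min 1 q ^ r ≤ min 1 q ^ j := pow_le_pow_of_le_one (le_min zero_le_one hq) (min_le_left _ _) hjr
    _ ≤ q ^ j := pow_le_pow_left₀ (le_min zero_le_one hq) (min_le_right _ _) j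

lemma pow_le_max_one_pow {q : ℝ} (hq : 0 ≤ q) {j r : ℕ} (hjr : j ≤ r) : q ^ j ≤ max 1 q ^ r :=
  calc q ^ j ≤ max 1 q ^ j := pow_le_pow_left₀ hq (le_max_right _ _) j
    _ ≤ max 1 q ^ r := pow_le_pow_right₀ (le_max_left _ _) hjr

def AcoefFactor (α β : ℝ) (r j k n i : ℕ) : ℝ :=
  ((k : ℝ) + β + 1 + i) * ((n : ℝ) + k + α + β + 2 + i) /
    ((2 * k + α + β + j + 1 + i) * (2 * k + α + β + r + 2 + i))

lemma Acoef_eq_choose_mul_prod (α β : ℝ) {r j : ℕ} (hjr : j ≤ r) (k n : ℕ) :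
    Acoef α β r j k n = r.choose j * ∏ i ∈ range j, AcoefFactor α β r j k n i := by
  rw [Acoef, if_pos ⟨Int.natCast_nonneg j, by exact_mod_cast hjr⟩]
  simp only [Int.toNat_natCast, Int.cast_natCast, poch_eq_prod, AcoefFactor, prod_div_distrib,
    prod_mul_distrib]
  ring

lemma le_AcoefFactor {α β : ℝ} (hα : -1 < α) (hβ : -1 < β) {r j k n i : ℕ} (hkn : k ≤ n)
    (hij : i < j) (hjr : j ≤ r) :
    min 1 (β + 1) / (α + β + 2 * r + 4) ^ 2 * ((n : ℝ) / (k + 1)) ≤ AcoefFactor α β r j k n i := by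
  have hkn' : (k : ℝ) ≤ n := by exact_mod_cast hkn
  have hij' : (i : ℝ) + 1 ≤ j := by exact_mod_cast hij
  have hjr' : (j : ℝ) ≤ r := by exact_mod_cast hjr
  have hk : (0 : ℝ) ≤ k := k.cast_nonneg
  have hi : (0 : ℝ) ≤ i := i.cast_nonneg
  set m := min 1 (β + 1)
  set M := α + β + 2 * r + 4
  have hm : 0 < m := lt_min one_pos (by linarith)
  have hM : 0 < M := by linarith
  have ha : m * (k + 1) ≤ k + β + 1 + i := by
    nlinarith [min_le_left 1 (β + 1), min_le_right 1 (β + 1)]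
  have hc : 2 * k + α + β + j + 1 + i ≤ M * (k + 1) := by nlinarith
  have hd : 2 * k + α + β + r + 2 + i ≤ M * (k + 1) := by nlinarith
  calc m / M ^ 2 * (n / (k + 1)) = m * (k + 1) * n / (M * (k + 1) * (M * (k + 1))) := by
        field_simp
    _ ≤ AcoefFactor α β r j k n i :=
        div_le_div₀ (mul_nonneg (by linarith) (by linarith))
          (mul_le_mul ha (by linarith) (by positivity) (by linarith))
          (mul_pos (by linarith) (by linarith)) (mul_le_mul hc hd (by linarith) (by positivity))

lemma AcoefFactor_le {α β : ℝ} (hα : -1 < α) (hβ : -1 < β) {r j k n i : ℕ} (hn : 1 ≤ n)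
    (hkn : k ≤ n) (hij : i < j) (hjr : j ≤ r) :
    AcoefFactor α β r j k n i ≤
      (β + r + 1) * (α + β + r + 4) / min 2 (α + β + 2) ^ 2 * ((n : ℝ) / (k + 1)) := by
  have hn' : (1 : ℝ) ≤ n := by exact_mod_cast hn
  have hkn' : (k : ℝ) ≤ n := by exact_mod_cast hkn
  have hij' : (i : ℝ) + 1 ≤ j := by exact_mod_cast hij
  have hjr' : (j : ℝ) ≤ r := by exact_mod_cast hjr
  have hk : (0 : ℝ) ≤ k := k.cast_nonneg
  have hi : (0 : ℝ) ≤ i := i.cast_nonneg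
  set m := min 2 (α + β + 2)
  have hm : 0 < m := lt_min two_pos (by linarith)
  have ha : (k : ℝ) + β + 1 + i ≤ (β + r + 1) * (k + 1) := by nlinarith
  have hb : (n : ℝ) + k + α + β + 2 + i ≤ (α + β + r + 4) * n := by nlinarith
  have hc : m * (k + 1) ≤ 2 * k + α + β + j + 1 + i := by
    nlinarith [min_le_left 2 (α + β + 2), min_le_right 2 (α + β + 2)]
  have hd : m * (k + 1) ≤ 2 * k + α + β + r + 2 + i := by
    nlinarith [min_le_left 2 (α + β + 2), min_le_right 2 (α + β + 2)]
  have ha₀ : (0 : ℝ) ≤ k + β + 1 + i := by linarith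
  have hb₀ : (0 : ℝ) ≤ n + k + α + β + 2 + i := by linarith
  calc AcoefFactor α β r j k n i
      ≤ (β + r + 1) * (k + 1) * ((α + β + r + 4) * n) / (m * (k + 1) * (m * (k + 1))) :=
        div_le_div₀ (mul_nonneg (ha₀.trans ha) (hb₀.trans hb)) (mul_le_mul ha hb hb₀ (ha₀.trans ha))
          (by positivity) (mul_le_mul hc hd (by positivity) (by linarith))
    _ = (β + r + 1) * (α + β + r + 4) / m ^ 2 * (n / (k + 1)) := by field_simp

lemma exists_AcoefFactor_bounds {α β : ℝ} (hα : -1 < α) (hβ : -1 < β) (r : ℕ) :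
    ∃ q₁ q₂ : ℝ, 0 < q₁ ∧ 0 < q₂ ∧ ∀ n k j i : ℕ, 1 ≤ n → k ≤ n → i < j → j ≤ r →
      q₁ * ((n : ℝ) / (k + 1)) ≤ AcoefFactor α β r j k n i ∧
        AcoefFactor α β r j k n i ≤ q₂ * ((n : ℝ) / (k + 1)) := by
  have hr : (0 : ℝ) ≤ r := r.cast_nonneg
  have hM : 0 < α + β + 2 * r + 4 := by linarith
  have hM₁ : 0 < β + r + 1 := by linarith
  have hM₂ : 0 < α + β + r + 4 := by linarith
  have hm₁ : 0 < min 1 (β + 1) := lt_min one_pos (by linarith)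
  have hm₂ : 0 < min 2 (α + β + 2) := lt_min two_pos (by linarith)
  exact ⟨_, _, by positivity, by positivity, fun n k j i hn hkn hij hjr =>
    ⟨le_AcoefFactor hα hβ hkn hij hjr, AcoefFactor_le hα hβ hn hkn hij hjr⟩⟩

theorem Acoef_bounds_general (α β : ℝ) (hα : -1 < α) (hβ : -1 < β) (r : ℕ) :
    ∃ c₁ c₂ : ℝ, 0 < c₁ ∧ 0 < c₂ ∧ ∀ n : ℕ, 1 ≤ n → ∀ k : ℕ, k ≤ n → ∀ j : ℕ, j ≤ r →
      c₁ * ((n : ℝ) / (k + 1)) ^ j ≤ Acoef α β r j k n ∧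
        Acoef α β r j k n ≤ c₂ * ((n : ℝ) / (k + 1)) ^ j := by
  obtain ⟨q₁, q₂, hq₁, hq₂, hfactor⟩ := exists_AcoefFactor_bounds hα hβ r
  refine ⟨min 1 q₁ ^ r, 2 ^ r * max 1 q₂ ^ r, by positivity, by positivity, ?_⟩
  intro n hn k hkn j hjr
  set X : ℝ := n / (k + 1)
  have hX : 0 ≤ X := by positivity
  have hfactor' (i) (hi : i ∈ range j) := hfactor n k j i hn hkn (mem_range.1 hi) hjr
  have hprod_ge : (q₁ * X) ^ j ≤ ∏ i ∈ range j, AcoefFactor α β r j k n i := by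
    simpa using prod_le_prod (fun _ _ => by positivity) (fun i hi => (hfactor' i hi).1)
  have hprod_le : ∏ i ∈ range j, AcoefFactor α β r j k n i ≤ (q₂ * X) ^ j := by
    simpa using prod_le_prod (fun i hi => (mul_nonneg hq₁.le hX).trans (hfactor' i hi).1)
      (fun i hi => (hfactor' i hi).2)
  have hprod_nonneg : 0 ≤ ∏ i ∈ range j, AcoefFactor α β r j k n i :=
    (pow_nonneg (mul_nonneg hq₁.le hX) j).trans hprod_ge
  have hchoose_ge : (1 : ℝ) ≤ r.choose j := by exact_mod_cast Nat.choose_pos hjr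
  have hchoose_le : (r.choose j : ℝ) ≤ 2 ^ r := by exact_mod_cast Nat.choose_le_two_pow r j
  rw [Acoef_eq_choose_mul_prod α β hjr]
  constructor
  · calc min 1 q₁ ^ r * X ^ j ≤ 1 * (q₁ * X) ^ j := by
          rw [one_mul, mul_pow]; gcongr; exact min_one_pow_le_pow hq₁.le hjr
      _ ≤ r.choose j * ∏ i ∈ range j, AcoefFactor α β r j k n i := by gcongr
  · calc r.choose j * ∏ i ∈ range j, AcoefFactor α β r j k n i ≤ 2 ^ r * (q₂ * X) ^ j := by
          gcongr
      _ ≤ 2 ^ r * max 1 q₂ ^ r * X ^ j := by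
          rw [mul_assoc, mul_pow]; gcongr; exact pow_le_max_one_pow hq₂.le hjr

theorem Acoef_bounds (α β : ℝ) (hα : -1 < α) (hβ : -1 < β) (r : ℕ) (hr : 0 < r) :
    ∃ c₁ c₂ : ℝ, 0 < c₁ ∧ 0 < c₂ ∧ ∀ n : ℕ, 1 ≤ n → ∀ k : ℕ, k ≤ n → ∀ j : ℕ, j ≤ r →
      c₁ * ((n : ℝ) / (k + 1)) ^ j ≤ Acoef α β r j k n ∧
        Acoef α β r j k n ≤ c₂ * ((n : ℝ) / (k + 1)) ^ j :=
  Acoef_bounds_general α β hα hβ r
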